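/- arXiv:1310.4543 — 2 statements merged into one kernel-verified Lean document; each statement's English description precedes it below -/
import Mathlib

section
/- Let Π : ℝ → ℝ³ be a differentiable curve, 𝕀 a symmetric positive-definite real 3×3 matrix, Ω(t) := 𝕀⁻¹Π(t), and θ ∈ ℝ. Suppose Π satisfies Π'(t) = Π(t) × Ω(t) + θ (𝕀 (Π(t) × Ω(t))) × Ω(t) for all t (the Casimir-dissipative rigid body equation for the inner product γ_𝕀 associated with the inertia tensor). Then for all t, (d/dt)(½ Π(t)·Π(t)) = − θ (𝕀 (Ω(t) × Π(t))) · (Ω(t) × Π(t)). -/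
/-!
The energy `½ Π·Π` has derivative `Π·Π'`. The conservative term contributes `Π·(Π × Ω) = 0`, and
by the cyclic symmetry of the triple product the dissipative term contributes
`θ Π·((𝕀(Π × Ω)) × Ω) = θ (𝕀(Π × Ω))·(Ω × Π) = −θ (𝕀(Ω × Π))·(Ω × Π)`.
-/

open Matrix

notation:74 a:74 " ×₃ " b:75 => crossProduct a b

theorem HasDerivAt.dotProduct {ι : Type*} [Fintype ι] {f g : ℝ → ι → ℝ} {f' g' : ι → ℝ}
    {t : ℝ} (hf : HasDerivAt f f' t) (hg : HasDerivAt g g' t) :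
    HasDerivAt (fun s => f s ⬝ᵥ g s) (f' ⬝ᵥ g t + f t ⬝ᵥ g') t := by
  have hsum : HasDerivAt (fun s => ∑ i, f s i * g s i) (∑ i, (f' i * g t i + f t i * g' i)) t :=
    HasDerivAt.fun_sum fun i _ => (hasDerivAt_pi.mp hf i).mul (hasDerivAt_pi.mp hg i)
  rwa [Finset.sum_add_distrib] at hsum

theorem HasDerivAt.half_dotProduct_self {ι : Type*} [Fintype ι] {f : ℝ → ι → ℝ}
    {f' : ι → ℝ} {t : ℝ} (hf : HasDerivAt f f' t) :
    HasDerivAt (fun s => 1 / 2 * (f s ⬝ᵥ f s)) (f t ⬝ᵥ f') t := by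
  have h := (hf.dotProduct hf).const_mul (1 / 2 : ℝ)
  rwa [dotProduct_comm f', ← two_mul, ← mul_assoc, one_div_mul_cancel two_ne_zero, one_mul] at h

theorem dotProduct_cross_add_smul_mulVec_cross_cross {R : Type*} [CommRing R]
    (I : Matrix (Fin 3) (Fin 3) R) (θ : R) (p w : Fin 3 → R) :
    p ⬝ᵥ ((p ×₃ w) + θ • ((I *ᵥ (p ×₃ w)) ×₃ w)) = -(θ * ((I *ᵥ (w ×₃ p)) ⬝ᵥ (w ×₃ p))) := by
  rw [dotProduct_add, dot_self_cross, zero_add, dotProduct_smul, triple_product_permutation,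
    ← cross_anticomm w p, mulVec_neg, neg_dotProduct, smul_eq_mul, mul_neg]

theorem statement11_general
    (I : Matrix (Fin 3) (Fin 3) ℝ) (θ : ℝ)
    (P : ℝ → Fin 3 → ℝ) (Ω : ℝ → Fin 3 → ℝ)
    (hP : ∀ t : ℝ,
      HasDerivAt P ((P t ×₃ Ω t) + θ • ((I.mulVec (P t ×₃ Ω t)) ×₃ Ω t)) t) :
    ∀ t : ℝ,
      HasDerivAt (fun s => (1 / 2) * (P s ⬝ᵥ P s))
        (-(θ * ((I.mulVec (Ω t ×₃ P t)) ⬝ᵥ (Ω t ×₃ P t)))) t := fun t => by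
  simpa only [dotProduct_cross_add_smul_mulVec_cross_cross] using (hP t).half_dotProduct_self

/-- A solution `Π` of the Casimir-dissipative rigid body equation for the
inner product `γ_𝕀` associated with the inertia tensor, `Π' = Π × Ω + θ (𝕀(Π × Ω)) × Ω`,
with `Ω = 𝕀⁻¹Π`, satisfies `d/dt (½ Π·Π) = − θ (𝕀(Ω × Π))·(Ω × Π)`. -/
theorem statement11
    (I : Matrix (Fin 3) (Fin 3) ℝ) (hI : I.PosDef) (θ : ℝ)
    (P : ℝ → Fin 3 → ℝ) (Ω : ℝ → Fin 3 → ℝ)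
    (hΩ : ∀ t : ℝ, Ω t = I⁻¹.mulVec (P t))
    (hP : ∀ t : ℝ,
      HasDerivAt P ((P t ×₃ Ω t) + θ • ((I.mulVec (P t ×₃ Ω t)) ×₃ Ω t)) t) :
    ∀ t : ℝ,
      HasDerivAt (fun s => (1 / 2) * (P s ⬝ᵥ P s))
        (-(θ * ((I.mulVec (Ω t ×₃ P t)) ⬝ᵥ (Ω t ×₃ P t)))) t :=
  statement11_general I θ P Ω hP
end

section
/- Let ψ, A : ℝ³ → ℝ be smooth (C^∞) functions of (t, x, y), 1-periodic in x and in y, let θ ∈ ℝ, and set ω := −Δψ, J := −ΔA, and Ã := A + θ{ψ, A}. Suppose the modified 2D incompressible MHD equations hold at every point: ∂_t ω + {ω, ψ} + {Ã, J} = 0 and ∂_t A + {Ã, ψ} = 0. Then the energy is exactly preserved: the function t ↦ ∫_{[0,1]²} (½ |∇ψ|² + ½ |∇A|²)(t, x, y) dx dy is constant on ℝ, where ∇ denotes the spatial gradient (∂_x, ∂_y). -/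
open MeasureTheory

/-- Partial derivative in the time variable `t` of a function of `(t, x, y)`. -/
noncomputable def pdt (f : ℝ × ℝ × ℝ → ℝ) (p : ℝ × ℝ × ℝ) : ℝ :=
  deriv (fun s => f (s, p.2.1, p.2.2)) p.1

/-- Partial derivative in the first spatial variable `x`. -/
noncomputable def pdx (f : ℝ × ℝ × ℝ → ℝ) (p : ℝ × ℝ × ℝ) : ℝ :=
  deriv (fun s => f (p.1, s, p.2.2)) p.2.1

/-- Partial derivative in the second spatial variable `y`. -/
noncomputable def pdy (f : ℝ × ℝ × ℝ → ℝ) (p : ℝ × ℝ × ℝ) : ℝ :=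
  deriv (fun s => f (p.1, p.2.1, s)) p.2.2

/-- The canonical (Jacobian) bracket `{f, g} = ∂ₓf ∂_y g − ∂_y f ∂ₓ g` in the spatial
variables. -/
noncomputable def jacBracket (f g : ℝ × ℝ × ℝ → ℝ) (p : ℝ × ℝ × ℝ) : ℝ :=
  pdx f p * pdy g p - pdy f p * pdx g p

/-- The spatial Laplacian `Δ = ∂ₓ² + ∂_y²`. -/
noncomputable def spatialLap (f : ℝ × ℝ × ℝ → ℝ) (p : ℝ × ℝ × ℝ) : ℝ :=
  pdx (pdx f) p + pdy (pdy f) p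

/-!
Differentiating under the integral sign, the energy changes at rate
`∫ ∇ψ·∇ψₜ + ∇A·∇Aₜ`. Integrating by parts over the periodic cell (periodicity kills every
boundary term) and commuting `∂ₜ` with `Δ`, this becomes
`∫ ψ ωₜ + ∫ J Aₜ = -∫ ψ {ω, ψ} - ∫ ψ {Ã, J} - ∫ J {Ã, ψ}`.
Since `{fg, h} = f{g, h} + g{f, h}` and `∫ {F, h} = 0` (by parts and Clairaut), the bracket
satisfies `∫ f{g, h} = -∫ g{f, h}`. Hence `∫ ψ{ω, ψ} = -∫ ω{ψ, ψ} = 0`, while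
`∫ ψ{Ã, J} = -∫ Ã{ψ, J}` and `∫ J{Ã, ψ} = -∫ Ã{J, ψ} = ∫ Ã{ψ, J}` cancel.
-/

open Set

local notation "ℝ³" => ℝ × ℝ × ℝ

lemma fderiv_fderiv_apply_comm {E F : Type*} [NormedAddCommGroup E] [NormedSpace ℝ E]
    [NormedAddCommGroup F] [NormedSpace ℝ F] {f : E → F} (hf : ContDiff ℝ 2 f) (x v w : E) :
    fderiv ℝ (fun y => fderiv ℝ f y v) x w = fderiv ℝ (fun y => fderiv ℝ f y w) x v := by
  have hd : DifferentiableAt ℝ (fderiv ℝ f) x :=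
    (hf.fderiv_right (m := 1) le_rfl).differentiable one_ne_zero x
  rw [fderiv_clm_apply hd (differentiableAt_const v),
    fderiv_clm_apply hd (differentiableAt_const w)]
  simpa using hf.contDiffAt.isSymmSndFDerivAt (by simp) w v

section PartialDerivatives

variable {f g h : ℝ³ → ℝ}

lemma hasDerivAt_pdt (hf : Differentiable ℝ f) (p : ℝ³) :
    HasDerivAt (fun s => f (s, p.2.1, p.2.2)) (pdt f p) p.1 :=
  (by fun_prop : DifferentiableAt ℝ (fun s => f (s, p.2.1, p.2.2)) p.1).hasDerivAt

lemma hasDerivAt_pdx (hf : Differentiable ℝ f) (p : ℝ³) :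
    HasDerivAt (fun s => f (p.1, s, p.2.2)) (pdx f p) p.2.1 :=
  (by fun_prop : DifferentiableAt ℝ (fun s => f (p.1, s, p.2.2)) p.2.1).hasDerivAt

lemma hasDerivAt_pdy (hf : Differentiable ℝ f) (p : ℝ³) :
    HasDerivAt (fun s => f (p.1, p.2.1, s)) (pdy f p) p.2.2 :=
  (by fun_prop : DifferentiableAt ℝ (fun s => f (p.1, p.2.1, s)) p.2.2).hasDerivAt

lemma pdt_eq_fderiv (hf : Differentiable ℝ f) : pdt f = fun p => fderiv ℝ f p (1, 0, 0) :=
  funext fun p => (hasDerivAt_pdt hf p).unique <|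
    (hf p).hasFDerivAt.comp_hasDerivAt p.1 <| (hasDerivAt_id _).prodMk (hasDerivAt_const _ _)

lemma pdx_eq_fderiv (hf : Differentiable ℝ f) : pdx f = fun p => fderiv ℝ f p (0, 1, 0) :=
  funext fun p => (hasDerivAt_pdx hf p).unique <|
    (hf p).hasFDerivAt.comp_hasDerivAt p.2.1 <|
      (hasDerivAt_const _ _).prodMk ((hasDerivAt_id _).prodMk (hasDerivAt_const _ _))

lemma pdy_eq_fderiv (hf : Differentiable ℝ f) : pdy f = fun p => fderiv ℝ f p (0, 0, 1) :=
  funext fun p => (hasDerivAt_pdy hf p).unique <|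
    (hf p).hasFDerivAt.comp_hasDerivAt p.2.2 <|
      (hasDerivAt_const _ _).prodMk ((hasDerivAt_const _ _).prodMk (hasDerivAt_id _))

lemma ContDiff.pdt {m n : WithTop ℕ∞} (hf : ContDiff ℝ n f) (hmn : m + 1 ≤ n) :
    ContDiff ℝ m (pdt f) := by
  rw [pdt_eq_fderiv (hf.differentiable (by rintro rfl; simp at hmn))]
  exact (hf.fderiv_right hmn).clm_apply contDiff_const

lemma ContDiff.pdx {m n : WithTop ℕ∞} (hf : ContDiff ℝ n f) (hmn : m + 1 ≤ n) :
    ContDiff ℝ m (pdx f) := by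
  rw [pdx_eq_fderiv (hf.differentiable (by rintro rfl; simp at hmn))]
  exact (hf.fderiv_right hmn).clm_apply contDiff_const

lemma ContDiff.pdy {m n : WithTop ℕ∞} (hf : ContDiff ℝ n f) (hmn : m + 1 ≤ n) :
    ContDiff ℝ m (pdy f) := by
  rw [pdy_eq_fderiv (hf.differentiable (by rintro rfl; simp at hmn))]
  exact (hf.fderiv_right hmn).clm_apply contDiff_const

lemma pdx_mul (hf : Differentiable ℝ f) (hg : Differentiable ℝ g) (p : ℝ³) :
    pdx (f * g) p = pdx f p * g p + f p * pdx g p :=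
  ((hasDerivAt_pdx hf p).mul (hasDerivAt_pdx hg p)).deriv

lemma pdy_mul (hf : Differentiable ℝ f) (hg : Differentiable ℝ g) (p : ℝ³) :
    pdy (f * g) p = pdy f p * g p + f p * pdy g p :=
  ((hasDerivAt_pdy hf p).mul (hasDerivAt_pdy hg p)).deriv

lemma pdx_pdy_comm (hf : ContDiff ℝ 2 f) : pdx (pdy f) = pdy (pdx f) := by
  have hd := hf.differentiable two_ne_zero
  rw [pdx_eq_fderiv ((hf.pdy (m := 1) le_rfl).differentiable one_ne_zero),
    pdy_eq_fderiv ((hf.pdx (m := 1) le_rfl).differentiable one_ne_zero),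
    pdy_eq_fderiv hd, pdx_eq_fderiv hd]
  exact funext fun p => fderiv_fderiv_apply_comm hf p _ _

lemma pdt_pdx_comm (hf : ContDiff ℝ 2 f) : pdt (pdx f) = pdx (pdt f) := by
  have hd := hf.differentiable two_ne_zero
  rw [pdt_eq_fderiv ((hf.pdx (m := 1) le_rfl).differentiable one_ne_zero),
    pdx_eq_fderiv ((hf.pdt (m := 1) le_rfl).differentiable one_ne_zero),
    pdx_eq_fderiv hd, pdt_eq_fderiv hd]
  exact funext fun p => fderiv_fderiv_apply_comm hf p _ _

lemma pdt_pdy_comm (hf : ContDiff ℝ 2 f) : pdt (pdy f) = pdy (pdt f) := by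
  have hd := hf.differentiable two_ne_zero
  rw [pdt_eq_fderiv ((hf.pdy (m := 1) le_rfl).differentiable one_ne_zero),
    pdy_eq_fderiv ((hf.pdt (m := 1) le_rfl).differentiable one_ne_zero),
    pdy_eq_fderiv hd, pdt_eq_fderiv hd]
  exact funext fun p => fderiv_fderiv_apply_comm hf p _ _

lemma pdt_add (hf : Differentiable ℝ f) (hg : Differentiable ℝ g) :
    pdt (f + g) = pdt f + pdt g :=
  funext fun p => ((hasDerivAt_pdt hf p).add (hasDerivAt_pdt hg p)).deriv

lemma pdt_neg (f : ℝ³ → ℝ) : pdt (-f) = -pdt f :=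
  funext fun _ => deriv.neg

lemma pdt_spatialLap (hf : ContDiff ℝ 3 f) : pdt (spatialLap f) = spatialLap (pdt f) := by
  have hf₂ : ContDiff ℝ 2 f := hf.of_le (by norm_num)
  rw [show spatialLap f = pdx (pdx f) + pdy (pdy f) from rfl,
    pdt_add (((hf.pdx (m := 2) le_rfl).pdx (m := 1) le_rfl).differentiable one_ne_zero)
      (((hf.pdy (m := 2) le_rfl).pdy (m := 1) le_rfl).differentiable one_ne_zero),
    pdt_pdx_comm (hf.pdx (m := 2) le_rfl), pdt_pdy_comm (hf.pdy (m := 2) le_rfl),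
    pdt_pdx_comm hf₂, pdt_pdy_comm hf₂]
  rfl

lemma jacBracket_self (f : ℝ³ → ℝ) : jacBracket f f = 0 :=
  funext fun p => by simp [jacBracket, mul_comm]

lemma jacBracket_comm (f g : ℝ³ → ℝ) : jacBracket g f = -jacBracket f g :=
  funext fun p => by simp only [jacBracket, Pi.neg_apply]; ring

lemma jacBracket_mul_left (hf : Differentiable ℝ f) (hg : Differentiable ℝ g) :
    jacBracket (f * g) h = f * jacBracket g h + g * jacBracket f h :=
  funext fun p => by
    simp only [jacBracket, Pi.add_apply, Pi.mul_apply, pdx_mul hf hg, pdy_mul hf hg]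
    ring

end PartialDerivatives

noncomputable def gradEnergy (u : ℝ³ → ℝ) : ℝ³ → ℝ :=
  fun p => 1 / 2 * (pdx u p ^ 2 + pdy u p ^ 2)

lemma ContDiff.gradEnergy {u : ℝ³ → ℝ} {m n : WithTop ℕ∞} (hu : ContDiff ℝ n u)
    (hmn : m + 1 ≤ n) : ContDiff ℝ m (gradEnergy u) :=
  contDiff_const.mul (((hu.pdx hmn).pow 2).add ((hu.pdy hmn).pow 2))

lemma pdt_gradEnergy {u : ℝ³ → ℝ} (hu : ContDiff ℝ 2 u) :
    pdt (gradEnergy u) = pdx u * pdx (pdt u) + pdy u * pdy (pdt u) := by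
  rw [← pdt_pdx_comm hu, ← pdt_pdy_comm hu]
  funext p
  have hx := hasDerivAt_pdt ((hu.pdx (m := 1) le_rfl).differentiable one_ne_zero) p
  have hy := hasDerivAt_pdt ((hu.pdy (m := 1) le_rfl).differentiable one_ne_zero) p
  refine (((hx.fun_pow 2).fun_add (hy.fun_pow 2)).const_mul (1 / 2)).deriv.trans ?_
  simp only [Pi.add_apply, Pi.mul_apply]
  ring

structure SmoothPeriodic (f : ℝ³ → ℝ) : Prop where
  contDiff : ContDiff ℝ (⊤ : ℕ∞) f
  periodic_x : ∀ t x y : ℝ, f (t, x + 1, y) = f (t, x, y)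
  periodic_y : ∀ t x y : ℝ, f (t, x, y + 1) = f (t, x, y)

namespace SmoothPeriodic

variable {f g : ℝ³ → ℝ}

lemma continuous (hf : SmoothPeriodic f) : Continuous f := hf.contDiff.continuous

lemma differentiable (hf : SmoothPeriodic f) : Differentiable ℝ f :=
  hf.contDiff.differentiable (by simp)

lemma contDiff_two (hf : SmoothPeriodic f) : ContDiff ℝ 2 f := hf.contDiff.of_le (by norm_cast)

lemma add (hf : SmoothPeriodic f) (hg : SmoothPeriodic g) : SmoothPeriodic (f + g) where
  contDiff := hf.contDiff.add hg.contDiff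
  periodic_x t x y := by simp only [Pi.add_apply, hf.periodic_x, hg.periodic_x]
  periodic_y t x y := by simp only [Pi.add_apply, hf.periodic_y, hg.periodic_y]

lemma mul (hf : SmoothPeriodic f) (hg : SmoothPeriodic g) : SmoothPeriodic (f * g) where
  contDiff := hf.contDiff.mul hg.contDiff
  periodic_x t x y := by simp only [Pi.mul_apply, hf.periodic_x, hg.periodic_x]
  periodic_y t x y := by simp only [Pi.mul_apply, hf.periodic_y, hg.periodic_y]

lemma neg (hf : SmoothPeriodic f) : SmoothPeriodic (-f) where
  contDiff := hf.contDiff.neg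
  periodic_x t x y := by simp only [Pi.neg_apply, hf.periodic_x]
  periodic_y t x y := by simp only [Pi.neg_apply, hf.periodic_y]

lemma const_mul (hf : SmoothPeriodic f) (c : ℝ) : SmoothPeriodic (fun p => c * f p) where
  contDiff := contDiff_const.mul hf.contDiff
  periodic_x t x y := by simp only [hf.periodic_x]
  periodic_y t x y := by simp only [hf.periodic_y]

lemma pdt (hf : SmoothPeriodic f) : SmoothPeriodic (pdt f) where
  contDiff := hf.contDiff.pdt (by norm_cast)
  periodic_x t x y := by simp only [_root_.pdt, hf.periodic_x]
  periodic_y t x y := by simp only [_root_.pdt, hf.periodic_y]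

lemma pdx (hf : SmoothPeriodic f) : SmoothPeriodic (pdx f) where
  contDiff := hf.contDiff.pdx (by norm_cast)
  periodic_x t x y := by
    show deriv (fun s => f (t, s, y)) (x + 1) = deriv (fun s => f (t, s, y)) x
    rw [← deriv_comp_add_const]
    simp only [hf.periodic_x]
  periodic_y t x y := by simp only [_root_.pdx, hf.periodic_y]

lemma pdy (hf : SmoothPeriodic f) : SmoothPeriodic (pdy f) where
  contDiff := hf.contDiff.pdy (by norm_cast)
  periodic_x t x y := by simp only [_root_.pdy, hf.periodic_x]
  periodic_y t x y := by
    show deriv (fun s => f (t, x, s)) (y + 1) = deriv (fun s => f (t, x, s)) y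
    rw [← deriv_comp_add_const]
    simp only [hf.periodic_y]

lemma jacBracket (hf : SmoothPeriodic f) (hg : SmoothPeriodic g) :
    SmoothPeriodic (jacBracket f g) :=
  (hf.pdx.mul hg.pdy).add (hf.pdy.mul hg.pdx).neg

lemma spatialLap (hf : SmoothPeriodic f) : SmoothPeriodic (spatialLap f) :=
  hf.pdx.pdx.add hf.pdy.pdy

end SmoothPeriodic

noncomputable def spatialIntegral (f : ℝ³ → ℝ) (t : ℝ) : ℝ :=
  ∫ q in Icc (0 : ℝ) 1 ×ˢ Icc (0 : ℝ) 1, f (t, q.1, q.2)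

lemma integral_Icc_deriv_eq_zero_of_periodic {h : ℝ → ℝ} (hh : ContDiff ℝ 1 h)
    (hper : Function.Periodic h 1) : ∫ x in Icc (0 : ℝ) 1, deriv h x = 0 := by
  rw [integral_Icc_eq_integral_Ioc, ← intervalIntegral.integral_of_le zero_le_one,
    intervalIntegral.integral_deriv_eq_sub (fun x _ => hh.differentiable one_ne_zero x)
      ((hh.continuous_deriv le_rfl).intervalIntegrable 0 1)]
  simpa [sub_eq_zero] using hper 0

section SpatialIntegral

variable {f g : ℝ³ → ℝ}

lemma integrableOn_unitSquare_slice (hf : Continuous f) (t : ℝ) :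
    IntegrableOn (fun q : ℝ × ℝ => f (t, q.1, q.2)) (Icc 0 1 ×ˢ Icc 0 1) :=
  (by fun_prop : Continuous fun q : ℝ × ℝ => f (t, q.1, q.2)).continuousOn.integrableOn_compact
    (isCompact_Icc.prod isCompact_Icc)

lemma spatialIntegral_add (hf : Continuous f) (hg : Continuous g) (t : ℝ) :
    spatialIntegral (f + g) t = spatialIntegral f t + spatialIntegral g t :=
  integral_add (integrableOn_unitSquare_slice hf t) (integrableOn_unitSquare_slice hg t)

lemma spatialIntegral_sub (hf : Continuous f) (hg : Continuous g) (t : ℝ) :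
    spatialIntegral (f - g) t = spatialIntegral f t - spatialIntegral g t :=
  integral_sub (integrableOn_unitSquare_slice hf t) (integrableOn_unitSquare_slice hg t)

lemma spatialIntegral_neg (f : ℝ³ → ℝ) (t : ℝ) :
    spatialIntegral (-f) t = -spatialIntegral f t :=
  integral_neg _

lemma spatialIntegral_eq_iterated (hf : Continuous f) (t : ℝ) :
    spatialIntegral f t = ∫ x in Icc (0 : ℝ) 1, ∫ y in Icc (0 : ℝ) 1, f (t, x, y) := by
  have hint := integrableOn_unitSquare_slice hf t
  rw [Measure.volume_eq_prod] at hint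
  rw [spatialIntegral, Measure.volume_eq_prod, setIntegral_prod _ hint]

lemma spatialIntegral_eq_iterated_swap (hf : Continuous f) (t : ℝ) :
    spatialIntegral f t = ∫ y in Icc (0 : ℝ) 1, ∫ x in Icc (0 : ℝ) 1, f (t, x, y) := by
  have hint : Integrable (Function.uncurry fun x y => f (t, x, y))
      ((volume.restrict (Icc 0 1)).prod (volume.restrict (Icc 0 1))) := by
    rw [Measure.prod_restrict, ← Measure.volume_eq_prod]
    exact integrableOn_unitSquare_slice hf t
  rw [spatialIntegral_eq_iterated hf, integral_integral_swap hint]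

lemma spatialIntegral_pdx_eq_zero {n : WithTop ℕ∞} (hf : ContDiff ℝ n f) (hn : 1 ≤ n)
    (hper : ∀ t x y : ℝ, f (t, x + 1, y) = f (t, x, y)) (t : ℝ) :
    spatialIntegral (pdx f) t = 0 := by
  have hinner (y : ℝ) : ∫ x in Icc (0 : ℝ) 1, pdx f (t, x, y) = 0 :=
    integral_Icc_deriv_eq_zero_of_periodic
      ((hf.of_le hn).comp (f := fun s => (t, s, y)) (by fun_prop)) (fun x => hper t x y)
  have hcont : Continuous (pdx f) := (hf.pdx (m := 0) (by simpa using hn)).continuous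
  simp [spatialIntegral_eq_iterated_swap hcont, hinner]

lemma spatialIntegral_pdy_eq_zero {n : WithTop ℕ∞} (hf : ContDiff ℝ n f) (hn : 1 ≤ n)
    (hper : ∀ t x y : ℝ, f (t, x, y + 1) = f (t, x, y)) (t : ℝ) :
    spatialIntegral (pdy f) t = 0 := by
  have hinner (x : ℝ) : ∫ y in Icc (0 : ℝ) 1, pdy f (t, x, y) = 0 :=
    integral_Icc_deriv_eq_zero_of_periodic
      ((hf.of_le hn).comp (f := fun s => (t, x, s)) (by fun_prop)) (fun y => hper t x y)
  have hcont : Continuous (pdy f) := (hf.pdy (m := 0) (by simpa using hn)).continuous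
  simp [spatialIntegral_eq_iterated hcont, hinner]

lemma hasDerivAt_spatialIntegral {n : WithTop ℕ∞} (hf : ContDiff ℝ n f) (hn : 1 ≤ n)
    (t₀ : ℝ) :
    HasDerivAt (spatialIntegral f) (spatialIntegral (pdt f) t₀) t₀ := by
  have hS : MeasurableSet (Icc (0 : ℝ) 1 ×ˢ Icc (0 : ℝ) 1) :=
    measurableSet_Icc.prod measurableSet_Icc
  have hft : Continuous (pdt f) := (hf.pdt (m := 0) (by simpa using hn)).continuous
  obtain ⟨C, hC⟩ := (isCompact_Icc (a := t₀ - 1) (b := t₀ + 1)).prod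
    (isCompact_Icc.prod isCompact_Icc) |>.exists_bound_of_continuousOn hft.continuousOn
  refine (hasDerivAt_integral_of_dominated_loc_of_deriv_le (bound := fun _ => C)
    (Metric.ball_mem_nhds t₀ one_pos)
    (.of_forall fun t => (integrableOn_unitSquare_slice hf.continuous t).aestronglyMeasurable)
    (integrableOn_unitSquare_slice hf.continuous t₀)
    (integrableOn_unitSquare_slice hft t₀).aestronglyMeasurable
    (ae_restrict_of_forall_mem hS fun q hq t ht => hC _ ⟨?_, hq⟩)
    (integrableOn_const (isCompact_Icc.prod isCompact_Icc).measure_lt_top.ne)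
    (ae_restrict_of_forall_mem hS fun q _ t _ =>
      hasDerivAt_pdt (hf.differentiable (by rintro rfl; simp at hn)) (t, q.1, q.2))).2
  rw [Metric.mem_ball, Real.dist_eq, abs_lt] at ht
  constructor <;> linarith [ht.1, ht.2]

end SpatialIntegral

section IntegrationByParts

variable {f g h : ℝ³ → ℝ}

lemma spatialIntegral_pdx_mul (hf : SmoothPeriodic f) (hg : SmoothPeriodic g) (t : ℝ) :
    spatialIntegral (pdx f * g) t = -spatialIntegral (f * pdx g) t := by
  have h₀ := spatialIntegral_pdx_eq_zero (hf.mul hg).contDiff (by norm_cast)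
    (hf.mul hg).periodic_x t
  rw [show pdx (f * g) = pdx f * g + f * pdx g from
      funext (pdx_mul hf.differentiable hg.differentiable),
    spatialIntegral_add (hf.pdx.continuous.mul hg.continuous)
      (hf.continuous.mul hg.pdx.continuous)] at h₀
  linarith

lemma spatialIntegral_pdy_mul (hf : SmoothPeriodic f) (hg : SmoothPeriodic g) (t : ℝ) :
    spatialIntegral (pdy f * g) t = -spatialIntegral (f * pdy g) t := by
  have h₀ := spatialIntegral_pdy_eq_zero (hf.mul hg).contDiff (by norm_cast)
    (hf.mul hg).periodic_y t
  rw [show pdy (f * g) = pdy f * g + f * pdy g from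
      funext (pdy_mul hf.differentiable hg.differentiable),
    spatialIntegral_add (hf.pdy.continuous.mul hg.continuous)
      (hf.continuous.mul hg.pdy.continuous)] at h₀
  linarith

lemma spatialIntegral_spatialLap_mul (hf : SmoothPeriodic f) (hg : SmoothPeriodic g) (t : ℝ) :
    spatialIntegral (spatialLap f * g) t =
      -spatialIntegral (pdx f * pdx g + pdy f * pdy g) t := by
  rw [show spatialLap f * g = pdx (pdx f) * g + pdy (pdy f) * g from add_mul _ _ _,
    spatialIntegral_add (hf.pdx.pdx.continuous.mul hg.continuous)
      (hf.pdy.pdy.continuous.mul hg.continuous),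
    spatialIntegral_pdx_mul hf.pdx hg, spatialIntegral_pdy_mul hf.pdy hg,
    spatialIntegral_add (hf.pdx.continuous.mul hg.pdx.continuous)
      (hf.pdy.continuous.mul hg.pdy.continuous)]
  ring

lemma spatialIntegral_jacBracket (hf : SmoothPeriodic f) (hg : SmoothPeriodic g) (t : ℝ) :
    spatialIntegral (jacBracket f g) t = 0 := by
  have h₁ := spatialIntegral_pdx_mul hf hg.pdy t
  have h₂ := spatialIntegral_pdy_mul hf hg.pdx t
  rw [pdx_pdy_comm hg.contDiff_two] at h₁
  rw [show jacBracket f g = pdx f * pdy g - pdy f * pdx g from rfl,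
    spatialIntegral_sub (hf.pdx.continuous.mul hg.pdy.continuous)
      (hf.pdy.continuous.mul hg.pdx.continuous), h₁, h₂, sub_self]

lemma spatialIntegral_mul_jacBracket (hf : SmoothPeriodic f) (hg : SmoothPeriodic g)
    (hh : SmoothPeriodic h) (t : ℝ) :
    spatialIntegral (f * jacBracket g h) t = -spatialIntegral (g * jacBracket f h) t := by
  have h₀ := spatialIntegral_jacBracket (hf.mul hg) hh t
  rw [jacBracket_mul_left hf.differentiable hg.differentiable,
    spatialIntegral_add (hf.mul (hg.jacBracket hh)).continuous
      (hg.mul (hf.jacBracket hh)).continuous] at h₀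
  linarith

end IntegrationByParts

section Energy

variable {u : ℝ³ → ℝ}

lemma spatialIntegral_pdt_gradEnergy (hu : SmoothPeriodic u) (t : ℝ) :
    spatialIntegral (pdt (gradEnergy u)) t = -spatialIntegral (spatialLap u * pdt u) t := by
  rw [pdt_gradEnergy hu.contDiff_two, spatialIntegral_spatialLap_mul hu hu.pdt, neg_neg]

lemma spatialIntegral_pdt_gradEnergy_eq_mul_pdt_spatialLap (hu : SmoothPeriodic u) (t : ℝ) :
    spatialIntegral (pdt (gradEnergy u)) t = -spatialIntegral (u * pdt (spatialLap u)) t := by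
  rw [pdt_gradEnergy hu.contDiff_two, pdt_spatialLap (hu.contDiff.of_le (by norm_cast)),
    mul_comm u, spatialIntegral_spatialLap_mul hu.pdt hu, mul_comm (pdx u), mul_comm (pdy u),
    neg_neg]

end Energy

theorem hasDerivAt_spatialIntegral_energy {ψ A Ã ω J : ℝ³ → ℝ} (hψ : SmoothPeriodic ψ)
    (hA : SmoothPeriodic A) (hÃ : SmoothPeriodic Ã)
    (hω : ω = -spatialLap ψ) (hJ : J = -spatialLap A)
    (h_vort : ∀ p, pdt ω p + jacBracket ω ψ p + jacBracket Ã J p = 0)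
    (h_ind : ∀ p, pdt A p + jacBracket Ã ψ p = 0) (t : ℝ) :
    HasDerivAt (spatialIntegral (gradEnergy ψ + gradEnergy A)) 0 t := by
  have hω' : SmoothPeriodic ω := hω ▸ hψ.spatialLap.neg
  have hJ' : SmoothPeriodic J := hJ ▸ hA.spatialLap.neg
  have hψ_t : pdt (spatialLap ψ) = jacBracket ω ψ + jacBracket Ã J := by
    have hω_t : pdt ω = -pdt (spatialLap ψ) := by rw [hω, pdt_neg]
    funext p
    have := congrFun hω_t p
    simp only [Pi.neg_apply, Pi.add_apply] at this ⊢
    linarith [h_vort p]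
  have hA_t : pdt A = -jacBracket Ã ψ := funext fun p => eq_neg_of_add_eq_zero_left (h_ind p)
  have hψ_part : spatialIntegral (pdt (gradEnergy ψ)) t =
      spatialIntegral (Ã * jacBracket ψ J) t := by
    rw [spatialIntegral_pdt_gradEnergy_eq_mul_pdt_spatialLap hψ, hψ_t, mul_add,
      spatialIntegral_add (hψ.mul (hω'.jacBracket hψ)).continuous
        (hψ.mul (hÃ.jacBracket hJ')).continuous,
      spatialIntegral_mul_jacBracket hψ hω' hψ, jacBracket_self, mul_zero,
      spatialIntegral_mul_jacBracket hψ hÃ hJ']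
    simp [spatialIntegral]
  have hA_part : spatialIntegral (pdt (gradEnergy A)) t =
      -spatialIntegral (Ã * jacBracket ψ J) t := by
    rw [spatialIntegral_pdt_gradEnergy hA,
      show spatialLap A * pdt A = J * jacBracket Ã ψ by rw [hJ, hA_t]; ring,
      spatialIntegral_mul_jacBracket hJ' hÃ hψ, jacBracket_comm, mul_neg, spatialIntegral_neg,
      neg_neg]
  have hEψ : ContDiff ℝ (⊤ : ℕ∞) (gradEnergy ψ) := hψ.contDiff.gradEnergy (by norm_cast)
  have hEA : ContDiff ℝ (⊤ : ℕ∞) (gradEnergy A) := hA.contDiff.gradEnergy (by norm_cast)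
  have hE : ContDiff ℝ (⊤ : ℕ∞) (gradEnergy ψ + gradEnergy A) := hEψ.add hEA
  convert hasDerivAt_spatialIntegral hE (by norm_cast) t using 1
  rw [pdt_add (hEψ.differentiable (by simp)) (hEA.differentiable (by simp)),
    spatialIntegral_add (hEψ.pdt (m := 0) (by simp)).continuous
      (hEA.pdt (m := 0) (by simp)).continuous,
    hψ_part, hA_part, add_neg_cancel]

/-- For smooth, spatially `1`-periodic solutions of the modified 2D
incompressible MHD equations `∂ₜω + {ω, ψ} + {Ã, J} = 0`, `∂ₜA + {Ã, ψ} = 0`, where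
`ω = −Δψ`, `J = −ΔA`, `Ã = A + θ{ψ, A}`, the energy
`t ↦ ∫ (½|∇ψ|² + ½|∇A|²)` over the unit square is constant on `ℝ`. -/
theorem statement16
    (ψ A : ℝ × ℝ × ℝ → ℝ) (θ : ℝ)
    (hψ : ContDiff ℝ (⊤ : ℕ∞) ψ) (hA : ContDiff ℝ (⊤ : ℕ∞) A)
    (hψx : ∀ t x y : ℝ, ψ (t, x + 1, y) = ψ (t, x, y))
    (hψy : ∀ t x y : ℝ, ψ (t, x, y + 1) = ψ (t, x, y))
    (hAx : ∀ t x y : ℝ, A (t, x + 1, y) = A (t, x, y))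
    (hAy : ∀ t x y : ℝ, A (t, x, y + 1) = A (t, x, y))
    (ω J Atil : ℝ × ℝ × ℝ → ℝ)
    (hω : ω = fun p => -spatialLap ψ p)
    (hJ : J = fun p => -spatialLap A p)
    (hAtil : Atil = fun p => A p + θ * jacBracket ψ A p)
    (heq1 : ∀ p : ℝ × ℝ × ℝ, pdt ω p + jacBracket ω ψ p + jacBracket Atil J p = 0)
    (heq2 : ∀ p : ℝ × ℝ × ℝ, pdt A p + jacBracket Atil ψ p = 0) :
    ∀ s t : ℝ,
      (∫ q in Set.Icc (0 : ℝ) 1 ×ˢ Set.Icc (0 : ℝ) 1,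
        ((1 / 2) * ((pdx ψ (s, q.1, q.2)) ^ 2 + (pdy ψ (s, q.1, q.2)) ^ 2) +
          (1 / 2) * ((pdx A (s, q.1, q.2)) ^ 2 + (pdy A (s, q.1, q.2)) ^ 2))) =
      (∫ q in Set.Icc (0 : ℝ) 1 ×ˢ Set.Icc (0 : ℝ) 1,
        ((1 / 2) * ((pdx ψ (t, q.1, q.2)) ^ 2 + (pdy ψ (t, q.1, q.2)) ^ 2) +
          (1 / 2) * ((pdx A (t, q.1, q.2)) ^ 2 + (pdy A (t, q.1, q.2)) ^ 2))) := by
  have hψ' : SmoothPeriodic ψ := ⟨hψ, hψx, hψy⟩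
  have hA' : SmoothPeriodic A := ⟨hA, hAx, hAy⟩
  have hÃ : SmoothPeriodic Atil := hAtil ▸ hA'.add ((hψ'.jacBracket hA').const_mul θ)
  have hE := hasDerivAt_spatialIntegral_energy hψ' hA' hÃ hω hJ heq1 heq2
  exact is_const_of_deriv_eq_zero (fun t => (hE t).differentiableAt) (fun t => (hE t).deriv)
end
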